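/- Under the semi-discrete flow, the segment length ε and the angle ν are constant in t: dε/dt = 0 and dν/dt = 0 (hence a and the torsion λ = sin ν/ε are also constant in t). -/

import Mathlib

open Matrix

noncomputable section

/-- Euclidean inner product on ℝ³ (written as `Fin 3 → ℝ`). -/
def dot3 (x y : Fin 3 → ℝ) : ℝ := x 0 * y 0 + x 1 * y 1 + x 2 * y 2

/-- Cross product on ℝ³. -/
def cross3 (x y : Fin 3 → ℝ) : Fin 3 → ℝ :=
  ![x 1 * y 2 - x 2 * y 1, x 2 * y 0 - x 0 * y 2, x 0 * y 1 - x 1 * y 0]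

/-- Euclidean norm on ℝ³. -/
def norm3 (x : Fin 3 → ℝ) : ℝ := Real.sqrt (dot3 x x)

/-- Tangent vector T_n = (γ_{n+1} − γ_n)/|γ_{n+1} − γ_n| of a discrete space curve. -/
def dT (γ : ℤ → Fin 3 → ℝ) (n : ℤ) : Fin 3 → ℝ :=
  (norm3 (γ (n + 1) - γ n))⁻¹ • (γ (n + 1) - γ n)

/-- Binormal vector B_n = (T_{n−1} × T_n)/|T_{n−1} × T_n|. -/
def dB (γ : ℤ → Fin 3 → ℝ) (n : ℤ) : Fin 3 → ℝ :=
  (norm3 (cross3 (dT γ (n - 1)) (dT γ n)))⁻¹ • cross3 (dT γ (n - 1)) (dT γ n)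

/-- Principal normal vector N_n = B_n × T_n. -/
def dN (γ : ℤ → Fin 3 → ℝ) (n : ℤ) : Fin 3 → ℝ := cross3 (dB γ n) (dT γ n)


/-!
The frame `(T_n, N_n, B_n)` is orthonormal, and the inner products between the frames at `n - 1`
and `n` are determined by `κ_n` and `ν` (e.g. `⟨N_n, T_{n-1}⟩ = -sin κ_n`,
`⟨T_n, B_{n-1}⟩ = -sin κ_n sin ν`). Because `cos κ + tan (κ/2) sin κ = 1`, the edge velocity
`γ_{n+1}' - γ_n'` is orthogonal to `T_n`; hence `|γ_{n+1} - γ_n|` is constant in time and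
`T_n' = ε⁻¹ (γ_{n+1}' - γ_n')`. Differentiating `⟨B_n, B_n⟩ = 1`, `⟨B_n, T_n⟩ = 0` and
`⟨B_n, T_{n-1}⟩ = 0` pins down `B_n' = (sin ν / a) (tan (κ_n/2) T_n + N_n)`, and then the
derivatives of `cos ν = ⟨B_n, B_{n-1}⟩` and `sin ν = ⟨B_n, N_{n-1}⟩` vanish. As `ν ∈ [-π, π)`,
`ν` itself is constant.
-/

open Real

lemma dot3_eq_dotProduct (x y : Fin 3 → ℝ) : dot3 x y = x ⬝ᵥ y := by
  simp [dot3, dotProduct, Fin.sum_univ_three]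

lemma cross3_eq_crossProduct (x y : Fin 3 → ℝ) : cross3 x y = x ⨯₃ y := by
  simp [cross3, cross_apply]

lemma norm3_eq_sqrt (x : Fin 3 → ℝ) : norm3 x = √(x ⬝ᵥ x) := by
  rw [norm3, dot3_eq_dotProduct]

lemma norm3_pos {x : Fin 3 → ℝ} (hx : x ≠ 0) : 0 < norm3 x := by
  rw [norm3_eq_sqrt, Real.sqrt_pos]
  simpa using dotProduct_self_star_pos_iff.2 hx

lemma dotProduct_inv_norm3_smul_self {x : Fin 3 → ℝ} (hx : x ≠ 0) :
    ((norm3 x)⁻¹ • x) ⬝ᵥ ((norm3 x)⁻¹ • x) = 1 := by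
  have h := norm3_pos hx
  rw [smul_dotProduct, dotProduct_smul, smul_eq_mul, smul_eq_mul, ← mul_assoc,
    ← Real.sq_sqrt (show 0 ≤ x ⬝ᵥ x by simpa using dotProduct_self_star_nonneg x),
    ← norm3_eq_sqrt]
  field_simp

lemma tan_half_mul_one_add_cos (x : ℝ) : tan (x / 2) * (1 + cos x) = sin x := by
  conv_rhs => rw [← mul_div_cancel₀ x (two_ne_zero' ℝ), sin_two_mul]
  conv_lhs => rw [← mul_div_cancel₀ x (two_ne_zero' ℝ), cos_two_mul]
  rw [tan_eq_sin_div_cos]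
  rcases eq_or_ne (cos (x / 2)) 0 with h | h
  · simp [h]
  · field_simp
    ring

lemma cos_add_tan_half_mul_sin {x : ℝ} (hx : cos (x / 2) ≠ 0) :
    cos x + tan (x / 2) * sin x = 1 := by
  conv_lhs => rw [← mul_div_cancel₀ x (two_ne_zero' ℝ), sin_two_mul, cos_two_mul]
  rw [tan_eq_sin_div_cos]
  field_simp
  linear_combination 2 * sin_sq_add_cos_sq (x / 2)

section Frame

variable {T B : Fin 3 → ℝ}

lemma crossProduct_dot_self_of_orthonormal (hT : T ⬝ᵥ T = 1) (hB : B ⬝ᵥ B = 1)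
    (hTB : T ⬝ᵥ B = 0) : B ⨯₃ T ⬝ᵥ B ⨯₃ T = 1 := by
  rw [cross_dot_cross, hT, hB, dotProduct_comm B T, hTB]; ring

lemma cross_crossProduct_of_orthonormal (hT : T ⬝ᵥ T = 1) (hTB : T ⬝ᵥ B = 0) :
    T ⨯₃ (B ⨯₃ T) = B := by
  rw [cross_cross_eq_smul_sub_smul', hT, dotProduct_comm B T, hTB]; simp

lemma eq_sum_smul_of_orthonormal (hT : T ⬝ᵥ T = 1) (hB : B ⬝ᵥ B = 1) (hTB : T ⬝ᵥ B = 0)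
    (w : Fin 3 → ℝ) :
    w = (w ⬝ᵥ T) • T + (w ⬝ᵥ B ⨯₃ T) • B ⨯₃ T + (w ⬝ᵥ B) • B := by
  have key : (w ⬝ᵥ B ⨯₃ T) • B ⨯₃ T = ((T ⬝ᵥ T) * (B ⬝ᵥ B) - (T ⬝ᵥ B) ^ 2) • w
      - ((B ⬝ᵥ B) * (w ⬝ᵥ T)) • T - ((T ⬝ᵥ T) * (w ⬝ᵥ B)) • B
      + ((T ⬝ᵥ B) * (w ⬝ᵥ T)) • B + ((T ⬝ᵥ B) * (w ⬝ᵥ B)) • T := by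
    ext i
    fin_cases i <;> simp [cross_apply, dotProduct, Fin.sum_univ_three] <;> ring
  rw [key, hT, hB, hTB]
  module

end Frame

lemma dN_eq (c : ℤ → Fin 3 → ℝ) (n : ℤ) : dN c n = dB c n ⨯₃ dT c n :=
  cross3_eq_crossProduct _ _

lemma dB_eq (c : ℤ → Fin 3 → ℝ) (n : ℤ) :
    dB c n = (norm3 (dT c (n - 1) ⨯₃ dT c n))⁻¹ • dT c (n - 1) ⨯₃ dT c n := by
  rw [dB, cross3_eq_crossProduct]

lemma dB_dot_dT (c : ℤ → Fin 3 → ℝ) (n : ℤ) : dB c n ⬝ᵥ dT c n = 0 := by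
  rw [dB_eq, smul_dotProduct, dotProduct_comm, dot_cross_self, smul_zero]

lemma dT_dot_dB (c : ℤ → Fin 3 → ℝ) (n : ℤ) : dT c n ⬝ᵥ dB c n = 0 := by
  rw [dotProduct_comm, dB_dot_dT]

lemma dB_dot_dT_pred (c : ℤ → Fin 3 → ℝ) (n : ℤ) : dB c n ⬝ᵥ dT c (n - 1) = 0 := by
  rw [dB_eq, smul_dotProduct, dotProduct_comm, dot_self_cross, smul_zero]

lemma dN_dot_dT (c : ℤ → Fin 3 → ℝ) (n : ℤ) : dN c n ⬝ᵥ dT c n = 0 := by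
  rw [dN_eq, dotProduct_comm, dot_cross_self]

lemma dN_dot_dB (c : ℤ → Fin 3 → ℝ) (n : ℤ) : dN c n ⬝ᵥ dB c n = 0 := by
  rw [dN_eq, dotProduct_comm, dot_self_cross]

/-- `r` plays the role of the factor `ε / a`. -/
def flowVelocity (c : ℤ → Fin 3 → ℝ) (κ : ℤ → ℝ) (ν r : ℝ) (n : ℤ) : Fin 3 → ℝ :=
  r • (cos ν • dT c n - (cos ν * tan (κ n / 2)) • dN c n + (sin ν * tan (κ n / 2)) • dB c n)

structure HasFrenetAngles (c : ℤ → Fin 3 → ℝ) (κ : ℤ → ℝ) (ν : ℝ) : Prop where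
  not_collinear : ∀ n, ¬ Collinear ℝ ({c (n - 1), c n, c (n + 1)} : Set (Fin 3 → ℝ))
  κ_mem : ∀ n, κ n ∈ Set.Ioo 0 π
  cos_κ : ∀ n, dT c n ⬝ᵥ dT c (n - 1) = cos (κ n)
  cos_ν : ∀ n, dB c n ⬝ᵥ dB c (n - 1) = cos ν
  sin_ν : ∀ n, dB c n ⬝ᵥ dN c (n - 1) = sin ν

namespace HasFrenetAngles

variable {c : ℤ → Fin 3 → ℝ} {κ : ℤ → ℝ} {ν : ℝ}

lemma succ_sub_ne_zero (h : HasFrenetAngles c κ ν) (n : ℤ) : c (n + 1) - c n ≠ 0 := by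
  intro hc
  apply h.not_collinear n
  rw [sub_eq_zero.1 hc, Set.pair_eq_singleton]
  exact collinear_pair ℝ _ _

lemma sin_pos (h : HasFrenetAngles c κ ν) (n : ℤ) : 0 < sin (κ n) :=
  Real.sin_pos_of_pos_of_lt_pi (h.κ_mem n).1 (h.κ_mem n).2

lemma cos_half_ne_zero (h : HasFrenetAngles c κ ν) (n : ℤ) : cos (κ n / 2) ≠ 0 := by
  obtain ⟨h0, hπ⟩ := h.κ_mem n
  exact (Real.cos_pos_of_mem_Ioo ⟨by linarith [Real.pi_pos], by linarith⟩).ne'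

lemma dT_dot_self (h : HasFrenetAngles c κ ν) (n : ℤ) : dT c n ⬝ᵥ dT c n = 1 :=
  dotProduct_inv_norm3_smul_self (h.succ_sub_ne_zero n)

lemma norm3_crossProduct_dT (h : HasFrenetAngles c κ ν) (n : ℤ) :
    norm3 (dT c (n - 1) ⨯₃ dT c n) = sin (κ n) := by
  rw [norm3_eq_sqrt, cross_dot_cross, h.dT_dot_self, h.dT_dot_self, dotProduct_comm, h.cos_κ,
    one_mul, ← sq, ← sin_sq, Real.sqrt_sq (h.sin_pos n).le]

lemma crossProduct_dT (h : HasFrenetAngles c κ ν) (n : ℤ) :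
    dT c (n - 1) ⨯₃ dT c n = sin (κ n) • dB c n := by
  rw [dB_eq, h.norm3_crossProduct_dT, smul_smul, mul_inv_cancel₀ (h.sin_pos n).ne', one_smul]

lemma dB_dot_self (h : HasFrenetAngles c κ ν) (n : ℤ) : dB c n ⬝ᵥ dB c n = 1 := by
  have hX : dT c (n - 1) ⨯₃ dT c n ≠ 0 := fun h0 => (h.sin_pos n).ne' <| by
    rw [← h.norm3_crossProduct_dT, h0, norm3_eq_sqrt, zero_dotProduct, Real.sqrt_zero]
  rw [dB_eq]
  exact dotProduct_inv_norm3_smul_self hX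

lemma dN_dot_self (h : HasFrenetAngles c κ ν) (n : ℤ) : dN c n ⬝ᵥ dN c n = 1 := by
  rw [dN_eq]
  exact crossProduct_dot_self_of_orthonormal (h.dT_dot_self n) (h.dB_dot_self n) (dT_dot_dB c n)

lemma dT_cross_dN (h : HasFrenetAngles c κ ν) (n : ℤ) : dT c n ⨯₃ dN c n = dB c n := by
  rw [dN_eq]
  exact cross_crossProduct_of_orthonormal (h.dT_dot_self n) (dT_dot_dB c n)

lemma eq_sum_smul (h : HasFrenetAngles c κ ν) (n : ℤ) (w : Fin 3 → ℝ) :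
    w = (w ⬝ᵥ dT c n) • dT c n + (w ⬝ᵥ dN c n) • dN c n + (w ⬝ᵥ dB c n) • dB c n := by
  rw [dN_eq]
  exact eq_sum_smul_of_orthonormal (h.dT_dot_self n) (h.dB_dot_self n) (dT_dot_dB c n) w

lemma dN_dot_dT_pred (h : HasFrenetAngles c κ ν) (n : ℤ) :
    dN c n ⬝ᵥ dT c (n - 1) = -sin (κ n) := by
  rw [dotProduct_comm, dN_eq, triple_product_permutation, ← cross_anticomm, h.crossProduct_dT,
    dotProduct_neg, dotProduct_smul, h.dB_dot_self, smul_eq_mul, mul_one]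

lemma dT_dot_dN_pred (h : HasFrenetAngles c κ ν) (n : ℤ) :
    dT c n ⬝ᵥ dN c (n - 1) = sin (κ n) * cos ν := by
  rw [dN_eq, triple_product_permutation, h.crossProduct_dT,
    dotProduct_smul, dotProduct_comm, h.cos_ν, smul_eq_mul]

lemma dT_dot_dB_pred (h : HasFrenetAngles c κ ν) (n : ℤ) :
    dT c n ⬝ᵥ dB c (n - 1) = -(sin (κ n) * sin ν) := by
  rw [← h.dT_cross_dN, triple_product_permutation, triple_product_permutation,
    ← cross_anticomm, h.crossProduct_dT, dotProduct_neg, dotProduct_smul, dotProduct_comm,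
    h.sin_ν, smul_eq_mul]

lemma dN_dot_dN_pred (h : HasFrenetAngles c κ ν) (n : ℤ) :
    dN c n ⬝ᵥ dN c (n - 1) = cos (κ n) * cos ν := by
  rw [dN_eq, dN_eq, cross_dot_cross, h.cos_ν, h.cos_κ, dB_dot_dT_pred, zero_mul, sub_zero,
    mul_comm]

lemma dN_dot_dB_pred (h : HasFrenetAngles c κ ν) (n : ℤ) :
    dN c n ⬝ᵥ dB c (n - 1) = -(cos (κ n) * sin ν) := by
  rw [← h.dT_cross_dN, dN_eq, cross_dot_cross, dB_dot_dT_pred, h.sin_ν, h.cos_κ]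
  ring

lemma dT_pred_eq (h : HasFrenetAngles c κ ν) (n : ℤ) :
    dT c (n - 1) = cos (κ n) • dT c n - sin (κ n) • dN c n := by
  rw [h.eq_sum_smul n (dT c (n - 1)), dotProduct_comm, h.cos_κ, dotProduct_comm,
    h.dN_dot_dT_pred, dotProduct_comm, dB_dot_dT_pred]
  module

lemma dB_eq_pred (h : HasFrenetAngles c κ ν) (n : ℤ) :
    dB c n = sin ν • dN c (n - 1) + cos ν • dB c (n - 1) := by
  rw [h.eq_sum_smul (n - 1) (dB c n), dB_dot_dT_pred, h.sin_ν, h.cos_ν]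
  module

lemma flowVelocity_dot_dT (h : HasFrenetAngles c κ ν) (r : ℝ) (n : ℤ) :
    flowVelocity c κ ν r n ⬝ᵥ dT c n = r * cos ν := by
  simp only [flowVelocity, smul_dotProduct, add_dotProduct, sub_dotProduct, h.dT_dot_self,
    dN_dot_dT, dB_dot_dT, smul_eq_mul]
  ring

lemma flowVelocity_dot_dT_pred (h : HasFrenetAngles c κ ν) (r : ℝ) (n : ℤ) :
    flowVelocity c κ ν r n ⬝ᵥ dT c (n - 1) = r * cos ν := by
  simp only [flowVelocity, smul_dotProduct, add_dotProduct, sub_dotProduct, h.cos_κ,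
    h.dN_dot_dT_pred, dB_dot_dT_pred, smul_eq_mul]
  linear_combination r * cos ν * cos_add_tan_half_mul_sin (h.cos_half_ne_zero n)

lemma flowVelocity_dot_dB (h : HasFrenetAngles c κ ν) (r : ℝ) (n : ℤ) :
    flowVelocity c κ ν r n ⬝ᵥ dB c n = r * (sin ν * tan (κ n / 2)) := by
  simp only [flowVelocity, smul_dotProduct, add_dotProduct, sub_dotProduct, dT_dot_dB,
    dN_dot_dB, h.dB_dot_self, smul_eq_mul]
  ring

lemma flowVelocity_dot_dB_pred (h : HasFrenetAngles c κ ν) (r : ℝ) (n : ℤ) :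
    flowVelocity c κ ν r n ⬝ᵥ dB c (n - 1) = 0 := by
  simp only [flowVelocity, smul_dotProduct, add_dotProduct, sub_dotProduct, h.dT_dot_dB_pred,
    h.dN_dot_dB_pred, h.cos_ν, smul_eq_mul]
  linear_combination r * cos ν * sin ν * tan_half_mul_one_add_cos (κ n)

lemma flowVelocity_pred_dot_dB (h : HasFrenetAngles c κ ν) (r : ℝ) (n : ℤ) :
    flowVelocity c κ ν r (n - 1) ⬝ᵥ dB c n = 0 := by
  rw [dotProduct_comm]
  simp only [flowVelocity, dotProduct_smul, dotProduct_add, dotProduct_sub, dB_dot_dT_pred,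
    h.sin_ν, h.cos_ν, smul_eq_mul]
  ring

lemma eq_smul_of_dot_dT (h : HasFrenetAngles c κ ν) {w : Fin 3 → ℝ} {β : ℝ} (n : ℤ)
    (hB : w ⬝ᵥ dB c n = 0) (hT : w ⬝ᵥ dT c n = β * tan (κ n / 2))
    (hT' : w ⬝ᵥ dT c (n - 1) = -(β * tan (κ n / 2))) :
    w = β • (tan (κ n / 2) • dT c n + dN c n) := by
  have hN : w ⬝ᵥ dN c n = β := by
    rw [h.dT_pred_eq, dotProduct_sub, dotProduct_smul, dotProduct_smul, hT, smul_eq_mul,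
      smul_eq_mul] at hT'
    have := h.sin_pos n
    apply mul_left_cancel₀ this.ne'
    linear_combination -hT' + β * tan_half_mul_one_add_cos (κ n)
  rw [h.eq_sum_smul n w, hB, hT, hN]
  module

end HasFrenetAngles

section Calculus

variable {f g : ℝ → Fin 3 → ℝ} {f' g' : Fin 3 → ℝ} {t : ℝ}

theorem HasDerivAt.dotProduct (hf : HasDerivAt f f' t) (hg : HasDerivAt g g' t) :
    HasDerivAt (fun s => f s ⬝ᵥ g s) (f' ⬝ᵥ g t + f t ⬝ᵥ g') t := by
  simpa [add_comm] using (dotProductBilin ℝ ℝ : (Fin 3 → ℝ) →ₗ[ℝ] _ →ₗ[ℝ] ℝ)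
    |>.toContinuousBilinearMap.hasDerivAt_of_bilinear (fun _ => hf) (fun _ => hg)

theorem HasDerivAt.crossProduct (hf : HasDerivAt f f' t) (hg : HasDerivAt g g' t) :
    HasDerivAt (fun s => f s ⨯₃ g s) (f' ⨯₃ g t + f t ⨯₃ g') t := by
  simpa [add_comm] using (_root_.crossProduct : (Fin 3 → ℝ) →ₗ[ℝ] _ →ₗ[ℝ] _)
    |>.toContinuousBilinearMap.hasDerivAt_of_bilinear (fun _ => hf) (fun _ => hg)

lemma HasDerivAt.dotProduct_add_dotProduct_eq_zero {a : ℝ} (hf : HasDerivAt f f' t)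
    (hg : HasDerivAt g g' t) (hfg : ∀ s, f s ⬝ᵥ g s = a) : f' ⬝ᵥ g t + f t ⬝ᵥ g' = 0 :=
  (hf.dotProduct hg).unique (by simpa only [hfg] using hasDerivAt_const t a)

theorem HasDerivAt.norm3 (hf : HasDerivAt f f' t) (h : f t ≠ 0) :
    HasDerivAt (fun s => _root_.norm3 (f s)) (((_root_.norm3 (f t))⁻¹ • f t) ⬝ᵥ f') t := by
  have hpos : 0 < f t ⬝ᵥ f t := by simpa using dotProduct_self_star_pos_iff.2 h
  simp only [norm3_eq_sqrt]
  convert (hf.dotProduct hf).sqrt hpos.ne' using 1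
  rw [dotProduct_comm f', smul_dotProduct, smul_eq_mul]
  field_simp
  ring

lemma HasDerivAt.differentiableAt_inv_norm3_smul (hf : HasDerivAt f f' t) (h : f t ≠ 0) :
    DifferentiableAt ℝ (fun s => (_root_.norm3 (f s))⁻¹ • f s) t :=
  ((hf.norm3 h).inv (norm3_pos h).ne').differentiableAt.smul hf.differentiableAt

end Calculus

section Flow

variable {γ : ℝ → ℤ → Fin 3 → ℝ} {κ : ℝ → ℤ → ℝ} {ν : ℝ → ℝ} {r t : ℝ}

lemma hasDerivAt_norm3_segment (h : HasFrenetAngles (γ t) (κ t) (ν t))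
    (hflow : ∀ n, HasDerivAt (fun s => γ s n) (flowVelocity (γ t) (κ t) (ν t) r n) t) (n : ℤ) :
    HasDerivAt (fun s => norm3 (γ s (n + 1) - γ s n)) 0 t := by
  refine (((hflow (n + 1)).sub (hflow n)).norm3 (h.succ_sub_ne_zero n)).congr_deriv ?_
  have hpred := h.flowVelocity_dot_dT_pred r (n + 1)
  rw [add_sub_cancel_right] at hpred
  change dT (γ t) n ⬝ᵥ _ = 0
  rw [dotProduct_sub, dotProduct_comm, hpred, dotProduct_comm, h.flowVelocity_dot_dT, sub_self]

lemma hasDerivAt_dT (h : HasFrenetAngles (γ t) (κ t) (ν t))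
    (hflow : ∀ n, HasDerivAt (fun s => γ s n) (flowVelocity (γ t) (κ t) (ν t) r n) t) (n : ℤ) :
    HasDerivAt (fun s => dT (γ s) n) ((norm3 (γ t (n + 1) - γ t n))⁻¹ •
      (flowVelocity (γ t) (κ t) (ν t) r (n + 1) - flowVelocity (γ t) (κ t) (ν t) r n)) t := by
  refine (((hasDerivAt_norm3_segment h hflow n).inv
    (norm3_pos (h.succ_sub_ne_zero n)).ne').smul ((hflow (n + 1)).sub (hflow n))).congr_deriv ?_
  simp

lemma hasDerivAt_dB {ε : ℝ} (hγ : ∀ s, HasFrenetAngles (γ s) (κ s) (ν s))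
    (hflow : ∀ n, HasDerivAt (fun s => γ s n) (flowVelocity (γ t) (κ t) (ν t) r n) t)
    (hε : ∀ n, norm3 (γ t (n + 1) - γ t n) = ε) (n : ℤ) :
    HasDerivAt (fun s => dB (γ s) n)
      ((ε⁻¹ * r * sin (ν t)) • (tan (κ t n / 2) • dT (γ t) n + dN (γ t) n)) t := by
  have h := hγ t
  have hT := hasDerivAt_dT h hflow n
  have hT' := hasDerivAt_dT h hflow (n - 1)
  rw [hε, sub_add_cancel] at hT'
  rw [hε] at hT
  obtain ⟨B', hB'⟩ : ∃ B', HasDerivAt (fun s => dB (γ s) n) B' t := by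
    simp only [dB_eq]
    refine ⟨_, ((hT'.crossProduct hT).differentiableAt_inv_norm3_smul ?_).hasDerivAt⟩
    rw [h.crossProduct_dT]
    exact smul_ne_zero (h.sin_pos n).ne' fun h0 => by simpa [h0] using h.dB_dot_self n
  have hBB := hB'.dotProduct_add_dotProduct_eq_zero hB' fun s => (hγ s).dB_dot_self n
  have hBT := hB'.dotProduct_add_dotProduct_eq_zero hT fun s => dB_dot_dT (γ s) n
  have hBT' := hB'.dotProduct_add_dotProduct_eq_zero hT' fun s => dB_dot_dT_pred (γ s) n
  have hsucc := h.flowVelocity_dot_dB_pred r (n + 1)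
  rw [add_sub_cancel_right] at hsucc
  have hself := h.flowVelocity_dot_dB r n
  have hpred := h.flowVelocity_pred_dot_dB r n
  simp only [dotProduct_comm (dB (γ t) n), smul_dotProduct, sub_dotProduct, hsucc, hself, hpred,
    smul_eq_mul] at hBT hBT'
  convert hB' using 1
  symm
  apply h.eq_smul_of_dot_dT n
  · linarith [dotProduct_comm B' (dB (γ t) n)]
  · linear_combination hBT
  · linear_combination hBT'

lemma hasDerivAt_dB_dot_dB_pred {ε : ℝ} (hγ : ∀ s, HasFrenetAngles (γ s) (κ s) (ν s))
    (hflow : ∀ n, HasDerivAt (fun s => γ s n) (flowVelocity (γ t) (κ t) (ν t) r n) t)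
    (hε : ∀ n, norm3 (γ t (n + 1) - γ t n) = ε) (n : ℤ) :
    HasDerivAt (fun s => dB (γ s) n ⬝ᵥ dB (γ s) (n - 1)) 0 t := by
  have h := hγ t
  refine ((hasDerivAt_dB hγ hflow hε n).dotProduct
    (hasDerivAt_dB hγ hflow hε (n - 1))).congr_deriv ?_
  simp only [smul_dotProduct, dotProduct_smul, add_dotProduct, dotProduct_add,
    h.dT_dot_dB_pred, h.dN_dot_dB_pred, dB_dot_dT_pred, h.sin_ν, smul_eq_mul]
  linear_combination -(ε⁻¹ * r * sin (ν t) ^ 2) * cos_add_tan_half_mul_sin (h.cos_half_ne_zero n)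

lemma hasDerivAt_dB_dot_dN_pred {ε : ℝ} (hγ : ∀ s, HasFrenetAngles (γ s) (κ s) (ν s))
    (hflow : ∀ n, HasDerivAt (fun s => γ s n) (flowVelocity (γ t) (κ t) (ν t) r n) t)
    (hε : ∀ n, norm3 (γ t (n + 1) - γ t n) = ε) (n : ℤ) :
    HasDerivAt (fun s => dB (γ s) n ⬝ᵥ dN (γ s) (n - 1)) 0 t := by
  have h := hγ t
  have hB := hasDerivAt_dB hγ hflow hε (n - 1)
  obtain ⟨N', hN'⟩ : ∃ N', HasDerivAt (fun s => dN (γ s) (n - 1)) N' t := by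
    simp only [dN_eq]
    exact ⟨_, hB.crossProduct (hasDerivAt_dT h hflow (n - 1))⟩
  have hNN := hN'.dotProduct_add_dotProduct_eq_zero hN' fun s => (hγ s).dN_dot_self (n - 1)
  have hNB := hN'.dotProduct_add_dotProduct_eq_zero hB fun s => dN_dot_dB (γ s) (n - 1)
  simp only [dotProduct_smul, dotProduct_add, dN_dot_dT, h.dN_dot_self, smul_eq_mul] at hNB
  rw [dotProduct_comm N'] at hNN hNB
  refine ((hasDerivAt_dB hγ hflow hε n).dotProduct hN').congr_deriv ?_
  rw [h.dB_eq_pred n]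
  simp only [smul_dotProduct, add_dotProduct, h.dT_dot_dN_pred, h.dN_dot_dN_pred, smul_eq_mul]
  linear_combination sin (ν t) / 2 * hNN + cos (ν t) * hNB
    + ε⁻¹ * r * sin (ν t) * cos (ν t) * cos_add_tan_half_mul_sin (h.cos_half_ne_zero n)

end Flow

lemma eq_of_cos_eq_of_sin_eq {x y : ℝ} (hx : x ∈ Set.Ico (-π) π) (hy : y ∈ Set.Ico (-π) π)
    (hc : cos x = cos y) (hs : sin x = sin y) : x = y := by
  have h1 : cos (x - y) = 1 := by rw [cos_sub, hc, hs, ← sq, ← sq, cos_sq_add_sin_sq]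
  have := (cos_eq_one_iff_of_lt_of_lt (by linarith [hx.1, hy.2]) (by linarith [hx.2, hy.1])).1 h1
  linarith

lemma eq_of_forall_hasDerivAt_zero {f : ℝ → ℝ} (hf : ∀ t, HasDerivAt f 0 t) (s t : ℝ) :
    f s = f t :=
  is_const_of_deriv_eq_zero (fun t => (hf t).differentiableAt) (fun t => (hf t).deriv) s t

lemma hasDerivAt_zero_of_forall_eq {f : ℝ → ℝ} (hf : ∀ s t, f s = f t) (t : ℝ) :
    HasDerivAt f 0 t :=
  (hasDerivAt_const t (f t)).congr_of_eventuallyEq (.of_forall fun s => hf s t)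

/-- Under the semi-discrete flow, the segment length ε and the angle ν are constant
in t (hence a and the torsion λ = sin ν / ε are also constant in t). -/
theorem statement9
    (γ : ℝ → ℤ → Fin 3 → ℝ) (ε ν : ℝ → ℝ) (κ : ℝ → ℤ → ℝ) (a : ℝ → ℝ)
    (hcurve : ∀ t n, ¬ Collinear ℝ ({γ t (n - 1), γ t n, γ t (n + 1)} : Set (Fin 3 → ℝ)))
    (hε : ∀ t n, norm3 (γ t (n + 1) - γ t n) = ε t)
    (hν : ∀ t, ν t ∈ Set.Ico (-Real.pi) Real.pi)
    (hνcos : ∀ t n, dot3 (dB (γ t) n) (dB (γ t) (n - 1)) = Real.cos (ν t))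
    (hνsin : ∀ t n, dot3 (dB (γ t) n) (dN (γ t) (n - 1)) = Real.sin (ν t))
    (hκ : ∀ t n, κ t n ∈ Set.Ioo 0 Real.pi)
    (hκcos : ∀ t n, dot3 (dT (γ t) n) (dT (γ t) (n - 1)) = Real.cos (κ t n))
    (ha : ∀ t, a t = (1 + Real.tan (ν t / 2) ^ 2) * ε t)
    (hflow : ∀ t n, HasDerivAt (fun s => γ s n)
      ((ε t / a t) • (Real.cos (ν t) • dT (γ t) n
        - (Real.cos (ν t) * Real.tan (κ t n / 2)) • dN (γ t) n
        + (Real.sin (ν t) * Real.tan (κ t n / 2)) • dB (γ t) n)) t) :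
    (∀ t, HasDerivAt ε 0 t) ∧ (∀ t, HasDerivAt ν 0 t) ∧
    (∀ t, HasDerivAt a 0 t) ∧
    (∀ t, HasDerivAt (fun s => Real.sin (ν s) / ε s) 0 t) := by
  have hγ : ∀ t, HasFrenetAngles (γ t) (κ t) (ν t) := fun t =>
    { not_collinear := hcurve t
      κ_mem := hκ t
      cos_κ := fun n => by rw [← dot3_eq_dotProduct, hκcos]
      cos_ν := fun n => by rw [← dot3_eq_dotProduct, hνcos]
      sin_ν := fun n => by rw [← dot3_eq_dotProduct, hνsin] }
  have hε' : ∀ t, HasDerivAt ε 0 t := fun t => by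
    simpa only [hε] using hasDerivAt_norm3_segment (hγ t) (hflow t) 0
  have hcos : ∀ s t, cos (ν s) = cos (ν t) := eq_of_forall_hasDerivAt_zero fun t => by
    simpa only [(hγ _).cos_ν] using hasDerivAt_dB_dot_dB_pred hγ (hflow t) (hε t) 0
  have hsin : ∀ s t, sin (ν s) = sin (ν t) := eq_of_forall_hasDerivAt_zero fun t => by
    simpa only [(hγ _).sin_ν] using hasDerivAt_dB_dot_dN_pred hγ (hflow t) (hε t) 0
  have hν_eq s t : ν s = ν t := eq_of_cos_eq_of_sin_eq (hν s) (hν t) (hcos s t) (hsin s t)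
  have hε_eq := eq_of_forall_hasDerivAt_zero hε'
  refine ⟨hε', hasDerivAt_zero_of_forall_eq hν_eq, hasDerivAt_zero_of_forall_eq fun s t => ?_,
    hasDerivAt_zero_of_forall_eq fun s t => ?_⟩
  · rw [ha, ha, hν_eq s t, hε_eq s t]
  · rw [hν_eq s t, hε_eq s t]
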